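/- Let 1 ≤ p ≤ q < ∞ and α ∈ [p/q, 1], and let f : E → E be Hölder continuous on bounded sets with exponent α. Then the composition operator C_f maps ℓ^p(E) into bv_q(E) and for every r > 0 there is a constant Γ_r (one may take Γ_r = 5·L_r where L_r is the Hölder constant of f on the closed ball of radius r) such that ‖C_f(x)−C_f(y)‖_{bv_q} ≤ Γ_r·‖x−y‖_{ℓ^p}^α for all x, y in the closed ball of radius r in ℓ^p(E). -/

import Mathlib

noncomputable def bvNorm {E : Type*} [NormedAddCommGroup E] (q : ℝ) (x : ℕ → E) : ℝ :=
  ‖x 0‖ + (∑' n : ℕ, ‖x (n + 1) - x n‖ ^ q) ^ (1 / q)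

noncomputable def lpNorm {E : Type*} [NormedAddCommGroup E] (p : ℝ) (x : ℕ → E) : ℝ :=
  (∑' n : ℕ, ‖x n‖ ^ p) ^ (1 / p)

/-!
Write `d n = ‖x n - y n‖` and `z n = f (x n) - f (y n)`. On the ball of radius `r` every term
`x n`, `y n` has norm at most `r`, so `‖z n‖ ≤ L * d n ^ α`. Since `p ≤ α q`, the embedding
`ℓ^p ⊆ ℓ^{αq}` gives `(∑ d n ^ (α q)) ^ (1/q) ≤ ‖d‖_p ^ α`, hence `‖z‖_q ≤ L ‖x - y‖_p ^ α`.
Finally `ℓ^q ⊆ bv_q` with `‖z‖_{bv_q} ≤ 3 ‖z‖_q`, by `‖z 0‖ ≤ ‖z‖_q` and Minkowski's inequality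
applied to `‖z (n+1) - z n‖ ≤ ‖z (n+1)‖ + ‖z n‖`.
-/

open Real

namespace lpNorm

variable {E : Type*} [NormedAddCommGroup E] {p : ℝ}

lemma nonneg (p : ℝ) (x : ℕ → E) : 0 ≤ lpNorm p x :=
  rpow_nonneg (tsum_nonneg fun _ => rpow_nonneg (norm_nonneg _) _) _

lemma rpow_eq_tsum (hp : 0 < p) (x : ℕ → E) : lpNorm p x ^ p = ∑' n, ‖x n‖ ^ p := by
  rw [lpNorm, one_div,
    rpow_inv_rpow (tsum_nonneg fun _ => rpow_nonneg (norm_nonneg _) _) hp.ne']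

lemma norm_le (hp : 0 < p) {x : ℕ → E} (hx : Summable fun n => ‖x n‖ ^ p) (n : ℕ) :
    ‖x n‖ ≤ lpNorm p x := by
  rw [← rpow_le_rpow_iff (norm_nonneg _) (nonneg p x) hp, rpow_eq_tsum hp]
  exact hx.le_tsum n fun m _ => rpow_nonneg (norm_nonneg _) _

lemma le_of_tsum_le {x : ℕ → E} {C : ℝ} (hp : 0 < p) (hC : 0 ≤ C)
    (h : ∑' n, ‖x n‖ ^ p ≤ C ^ p) : lpNorm p x ≤ C := by
  rwa [← rpow_le_rpow_iff (nonneg p x) hC hp, rpow_eq_tsum hp]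

lemma shift_le (hp : 0 < p) {x : ℕ → E} (hx : Summable fun n => ‖x n‖ ^ p) :
    lpNorm p (fun n => x (n + 1)) ≤ lpNorm p x :=
  le_of_tsum_le hp (nonneg p x) <| (rpow_eq_tsum hp x).symm ▸
    tsum_comp_le_tsum_of_inj hx (fun _ => rpow_nonneg (norm_nonneg _) _) (add_left_injective 1)

lemma summable_and_le_add (hp : 1 ≤ p) {u v w : ℕ → E} (huvw : ∀ n, ‖u n‖ ≤ ‖v n‖ + ‖w n‖)
    (hv : Summable fun n => ‖v n‖ ^ p) (hw : Summable fun n => ‖w n‖ ^ p) :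
    (Summable fun n => ‖u n‖ ^ p) ∧ lpNorm p u ≤ lpNorm p v + lpNorm p w := by
  have hp0 : 0 < p := one_pos.trans_le hp
  obtain ⟨hsum, hle⟩ := Lp_add_le_tsum_of_nonneg hp (fun n => norm_nonneg (v n))
    (fun n => norm_nonneg (w n)) hv hw
  have hpow : ∀ n, ‖u n‖ ^ p ≤ (‖v n‖ + ‖w n‖) ^ p := fun n =>
    rpow_le_rpow (norm_nonneg _) (huvw n) hp0.le
  have hu : Summable fun n => ‖u n‖ ^ p :=
    hsum.of_nonneg_of_le (fun _ => rpow_nonneg (norm_nonneg _) _) hpow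
  refine ⟨hu, le_trans ?_ hle⟩
  exact rpow_le_rpow (tsum_nonneg fun _ => rpow_nonneg (norm_nonneg _) _)
    (hu.tsum_le_tsum hpow hsum) (by positivity)

lemma summable_rpow_and_tsum_le (hp : 0 < p) {s : ℝ} (hps : p ≤ s) {x : ℕ → E}
    (hx : Summable fun n => ‖x n‖ ^ p) :
    (Summable fun n => ‖x n‖ ^ s) ∧ ∑' n, ‖x n‖ ^ s ≤ lpNorm p x ^ s := by
  set S := lpNorm p x
  have hS : 0 ≤ S := nonneg p x
  -- each term is at most `S`, so raising it from the power `p` to `s` costs at most `S ^ (s - p)`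
  have hterm : ∀ n, ‖x n‖ ^ s ≤ ‖x n‖ ^ p * S ^ (s - p) := fun n => by
    calc ‖x n‖ ^ s = ‖x n‖ ^ p * ‖x n‖ ^ (s - p) := by
          rw [← rpow_add_of_nonneg (norm_nonneg _) hp.le (by linarith), add_sub_cancel]
      _ ≤ ‖x n‖ ^ p * S ^ (s - p) := by
          have := norm_le hp hx n
          gcongr
  have hmaj : Summable fun n => ‖x n‖ ^ p * S ^ (s - p) := hx.mul_right _
  have hxs : Summable fun n => ‖x n‖ ^ s :=
    hmaj.of_nonneg_of_le (fun _ => rpow_nonneg (norm_nonneg _) _) hterm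
  refine ⟨hxs, ?_⟩
  calc ∑' n, ‖x n‖ ^ s ≤ ∑' n, ‖x n‖ ^ p * S ^ (s - p) := hxs.tsum_le_tsum hterm hmaj
    _ = S ^ p * S ^ (s - p) := by rw [tsum_mul_right, rpow_eq_tsum hp]
    _ = S ^ s := by rw [← rpow_add_of_nonneg hS hp.le (by linarith), add_sub_cancel]

lemma summable_and_le_mul_rpow {F : Type*} [NormedAddCommGroup F] (hp : 0 < p) {q α L : ℝ}
    (hq : 0 < q) (hpαq : p ≤ α * q) (hL : 0 ≤ L) {z : ℕ → F} {w : ℕ → E}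
    (hzw : ∀ n, ‖z n‖ ≤ L * ‖w n‖ ^ α) (hw : Summable fun n => ‖w n‖ ^ p) :
    (Summable fun n => ‖z n‖ ^ q) ∧ lpNorm q z ≤ L * lpNorm p w ^ α := by
  obtain ⟨hwαq, htsum⟩ := summable_rpow_and_tsum_le hp hpαq hw
  have hpow : ∀ n, ‖z n‖ ^ q ≤ L ^ q * ‖w n‖ ^ (α * q) := fun n => by
    rw [rpow_mul (norm_nonneg _), ← mul_rpow hL (rpow_nonneg (norm_nonneg _) _)]
    exact rpow_le_rpow (norm_nonneg _) (hzw n) hq.le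
  have hmaj : Summable fun n => L ^ q * ‖w n‖ ^ (α * q) := hwαq.mul_left _
  have hz : Summable fun n => ‖z n‖ ^ q :=
    hmaj.of_nonneg_of_le (fun _ => rpow_nonneg (norm_nonneg _) _) hpow
  refine ⟨hz, le_of_tsum_le hq (mul_nonneg hL (rpow_nonneg (nonneg p w) _)) ?_⟩
  calc ∑' n, ‖z n‖ ^ q ≤ ∑' n, L ^ q * ‖w n‖ ^ (α * q) := hz.tsum_le_tsum hpow hmaj
    _ = L ^ q * ∑' n, ‖w n‖ ^ (α * q) := tsum_mul_left
    _ ≤ L ^ q * lpNorm p w ^ (α * q) := by gcongr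
    _ = (L * lpNorm p w ^ α) ^ q := by
      rw [mul_rpow hL (rpow_nonneg (nonneg p w) _), rpow_mul (nonneg p w)]

end lpNorm

lemma bvNorm_le_three_mul_lpNorm {E : Type*} [NormedAddCommGroup E] {q : ℝ} (hq : 1 ≤ q)
    {z : ℕ → E} (hz : Summable fun n => ‖z n‖ ^ q) :
    (Summable fun n => ‖z (n + 1) - z n‖ ^ q) ∧ bvNorm q z ≤ 3 * lpNorm q z := by
  have hq0 : 0 < q := one_pos.trans_le hq
  obtain ⟨hdiff, hle⟩ := lpNorm.summable_and_le_add hq (fun n => norm_sub_le (z (n + 1)) (z n))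
    ((summable_nat_add_iff 1).mpr hz) hz
  refine ⟨hdiff, ?_⟩
  calc bvNorm q z = ‖z 0‖ + lpNorm q (fun n => z (n + 1) - z n) := rfl
    _ ≤ lpNorm q z + (lpNorm q z + lpNorm q z) := by
      gcongr
      · exact lpNorm.norm_le hq0 hz 0
      · exact hle.trans (add_le_add_left (lpNorm.shift_le hq0 hz) _)
    _ = 3 * lpNorm q z := by ring

theorem stmt15_general {E : Type*} [NormedAddCommGroup E]
    (p q α : ℝ) (hp : 1 ≤ p) (hpq : p ≤ q) (hα : p / q ≤ α)
    (f : E → E)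
    (hf : ∀ r > (0 : ℝ), ∃ L ≥ (0 : ℝ), ∀ u w : E, ‖u‖ ≤ r → ‖w‖ ≤ r →
      ‖f u - f w‖ ≤ L * ‖u - w‖ ^ α) :
    (∀ x : ℕ → E, (Summable fun n : ℕ => ‖x n‖ ^ p) →
      Summable fun n : ℕ => ‖f (x (n + 1)) - f (x n)‖ ^ q) ∧
    ∀ r > (0 : ℝ), ∀ L ≥ (0 : ℝ),
      (∀ u w : E, ‖u‖ ≤ r → ‖w‖ ≤ r → ‖f u - f w‖ ≤ L * ‖u - w‖ ^ α) →
      ∀ x y : ℕ → E, (Summable fun n : ℕ => ‖x n‖ ^ p) →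
        (Summable fun n : ℕ => ‖y n‖ ^ p) →
        lpNorm p x ≤ r → lpNorm p y ≤ r →
        bvNorm q (fun n => f (x n) - f (y n)) ≤ 5 * L * lpNorm p (fun n => x n - y n) ^ α := by
  have hp0 : 0 < p := one_pos.trans_le hp
  have hq0 : 0 < q := hp0.trans_le hpq
  have hpαq : p ≤ α * q := by rwa [div_le_iff₀ hq0] at hα
  constructor
  · intro x hx
    obtain ⟨L, hL0, hL⟩ := hf (lpNorm p x + 1) (by linarith [lpNorm.nonneg p x])
    have hxr : ∀ n, ‖x n‖ ≤ lpNorm p x + 1 := fun n => by linarith [lpNorm.norm_le hp0 hx n]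
    have hdx : Summable fun n => ‖x (n + 1) - x n‖ ^ p :=
      (lpNorm.summable_and_le_add hp (fun n => norm_sub_le _ _)
        ((summable_nat_add_iff 1).mpr hx) hx).1
    exact (lpNorm.summable_and_le_mul_rpow hp0 hq0 hpαq hL0
      (fun n => hL _ _ (hxr (n + 1)) (hxr n)) hdx).1
  · intro r _ L hL0 hL x y hx hy hxr hyr
    have hdxy : Summable fun n => ‖x n - y n‖ ^ p :=
      (lpNorm.summable_and_le_add hp (fun n => norm_sub_le _ _) hx hy).1
    obtain ⟨hz, hzle⟩ := lpNorm.summable_and_le_mul_rpow hp0 hq0 hpαq hL0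
      (fun n => hL _ _ ((lpNorm.norm_le hp0 hx n).trans hxr) ((lpNorm.norm_le hp0 hy n).trans hyr))
      hdxy
    have hLS : 0 ≤ L * lpNorm p (fun n => x n - y n) ^ α :=
      mul_nonneg hL0 (rpow_nonneg (lpNorm.nonneg _ _) _)
    calc bvNorm q (fun n => f (x n) - f (y n))
        ≤ 3 * lpNorm q (fun n => f (x n) - f (y n)) :=
          (bvNorm_le_three_mul_lpNorm (hp.trans hpq) hz).2
      _ ≤ 3 * (L * lpNorm p (fun n => x n - y n) ^ α) := by gcongr
      _ ≤ 5 * L * lpNorm p (fun n => x n - y n) ^ α := by linarith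

theorem stmt15 {E : Type*} [NormedAddCommGroup E]
    (p q α : ℝ) (hp : 1 ≤ p) (hpq : p ≤ q) (hα : p / q ≤ α) (hα1 : α ≤ 1)
    (f : E → E)
    (hf : ∀ r > (0 : ℝ), ∃ L ≥ (0 : ℝ), ∀ u w : E, ‖u‖ ≤ r → ‖w‖ ≤ r →
      ‖f u - f w‖ ≤ L * ‖u - w‖ ^ α) :
    (∀ x : ℕ → E, (Summable fun n : ℕ => ‖x n‖ ^ p) →
      Summable fun n : ℕ => ‖f (x (n + 1)) - f (x n)‖ ^ q) ∧
    ∀ r > (0 : ℝ), ∀ L ≥ (0 : ℝ),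
      (∀ u w : E, ‖u‖ ≤ r → ‖w‖ ≤ r → ‖f u - f w‖ ≤ L * ‖u - w‖ ^ α) →
      ∀ x y : ℕ → E, (Summable fun n : ℕ => ‖x n‖ ^ p) →
        (Summable fun n : ℕ => ‖y n‖ ^ p) →
        lpNorm p x ≤ r → lpNorm p y ≤ r →
        bvNorm q (fun n => f (x n) - f (y n)) ≤ 5 * L * lpNorm p (fun n => x n - y n) ^ α :=
  stmt15_general p q α hp hpq hα f hf
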